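/- The generalised Eulerian polynomial of type B satisfies the functional equation d_{B_η}(1/t) = t^{−n} d_{B_η}(t) for every composition η of n; equivalently, its coefficient sequence is palindromic: the number of w ∈ B_η with des(w) = k equals the number with des(w) = n − k for all 0 ≤ k ≤ n. -/

import Mathlib

/-- Signed multiset permutations of length `n` on letters `1,…,r`: a word together with
a sign vector (`true` meaning a negative sign). -/
abbrev SignedWord (n r : ℕ) := (Fin n → Fin r) × (Fin n → Bool)

/-- The 1-indexed letter sequence of a word, with `w_0 := 0` (letters are `1,…,r`). -/
def wordLetter {n r : ℕ} (w : Fin n → Fin r) : ℕ → ℕ := fun i =>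
  if h : i - 1 < n ∧ 1 ≤ i then ((w ⟨i - 1, h.1⟩ : Fin r) : ℕ) + 1 else 0

/-- The 1-indexed sign sequence, with `ε_0 := +1` (i.e. `false`). -/
def wordSign {n : ℕ} (e : Fin n → Bool) : ℕ → Bool := fun i =>
  if h : i - 1 < n ∧ 1 ≤ i then e ⟨i - 1, h.1⟩ else false

/-- The descent set of a signed multiset permutation `w^ε` (defined via
standardisation, equivalently by the explicit case description). -/
def signedWordDesSet {n r : ℕ} (w : SignedWord n r) : Finset ℕ :=
  (Finset.range n).filter (fun i =>
    (wordSign w.2 i = false ∧ wordSign w.2 (i + 1) = false ∧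
      wordLetter w.1 (i + 1) < wordLetter w.1 i) ∨
    (wordSign w.2 i = true ∧ wordSign w.2 (i + 1) = true ∧
      wordLetter w.1 i ≤ wordLetter w.1 (i + 1)) ∨
    (wordSign w.2 i = false ∧ wordSign w.2 (i + 1) = true))

/-- The set `B_η` of signed multiset permutations for the composition `η`. -/
def signedMultisetPerms (n r : ℕ) (η : Fin r → ℕ) : Finset (SignedWord n r) :=
  Finset.univ.filter (fun w =>
    ∀ j : Fin r, (Finset.univ.filter (fun i : Fin n => w.1 i = j)).card = η j)

/-!
Reversing every sign of a signed word complements its descent set in `{0, …, n-1}`: at an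
interior position the four sign patterns are exchanged in pairs whose descent conditions are
complementary, and at position `0` (where `ε_0 = +1` is not reversed) a descent occurs exactly
when `ε_1` is negative. Sign reversal therefore is an involution of `B_η` sending `des = k` to
`des = n - k`.
-/

def IsSignedDescent (a b : Bool) (x y : ℕ) : Prop :=
  (a = false ∧ b = false ∧ y < x) ∨ (a = true ∧ b = true ∧ x ≤ y) ∨ (a = false ∧ b = true)

theorem isSignedDescent_not_not (a b : Bool) (x y : ℕ) :
    IsSignedDescent (!a) (!b) x y ↔ ¬IsSignedDescent a b x y := by
  cases a <;> cases b <;> simp [IsSignedDescent]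

theorem isSignedDescent_false_zero (b : Bool) (y : ℕ) :
    IsSignedDescent false b 0 y ↔ b = true := by
  cases b <;> simp [IsSignedDescent]

theorem mem_signedWordDesSet {n r : ℕ} (w : SignedWord n r) (i : ℕ) :
    i ∈ signedWordDesSet w ↔ i < n ∧
      IsSignedDescent (wordSign w.2 i) (wordSign w.2 (i + 1))
        (wordLetter w.1 i) (wordLetter w.1 (i + 1)) := by
  simp [signedWordDesSet, IsSignedDescent]

@[simp]
theorem wordSign_zero {n : ℕ} (e : Fin n → Bool) : wordSign e 0 = false := by
  simp [wordSign]

@[simp]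
theorem wordLetter_zero {n r : ℕ} (w : Fin n → Fin r) : wordLetter w 0 = 0 := by
  simp [wordLetter]

theorem wordSign_not {n : ℕ} (e : Fin n → Bool) {i : ℕ} (h₁ : 1 ≤ i) (h₂ : i ≤ n) :
    wordSign (fun j => !e j) i = !wordSign e i := by
  simp [wordSign, h₁, show i - 1 < n by omega]

def flipSigns {n r : ℕ} (w : SignedWord n r) : SignedWord n r :=
  (w.1, fun i => !w.2 i)

@[simp]
theorem flipSigns_fst {n r : ℕ} (w : SignedWord n r) : (flipSigns w).1 = w.1 :=
  rfl

theorem flipSigns_involutive {n r : ℕ} : Function.Involutive (flipSigns (n := n) (r := r)) :=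
  fun w => by simp [flipSigns]

theorem flipSigns_mem_signedMultisetPerms_iff {n r : ℕ} (η : Fin r → ℕ) (w : SignedWord n r) :
    flipSigns w ∈ signedMultisetPerms n r η ↔ w ∈ signedMultisetPerms n r η := by
  simp [signedMultisetPerms, flipSigns]

theorem isSignedDescent_flipSigns_iff {n r : ℕ} (w : SignedWord n r) {i : ℕ} (hi : i < n) :
    IsSignedDescent (wordSign (flipSigns w).2 i) (wordSign (flipSigns w).2 (i + 1))
        (wordLetter w.1 i) (wordLetter w.1 (i + 1)) ↔
      ¬IsSignedDescent (wordSign w.2 i) (wordSign w.2 (i + 1))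
        (wordLetter w.1 i) (wordLetter w.1 (i + 1)) := by
  rw [flipSigns, wordSign_not w.2 (Nat.le_add_left 1 i) hi]
  rcases Nat.eq_zero_or_pos i with rfl | hpos
  · simp [isSignedDescent_false_zero]
  · rw [wordSign_not w.2 hpos hi.le, isSignedDescent_not_not]

theorem signedWordDesSet_flipSigns {n r : ℕ} (w : SignedWord n r) :
    signedWordDesSet (flipSigns w) = Finset.range n \ signedWordDesSet w := by
  ext i
  by_cases hi : i < n
  · simp [mem_signedWordDesSet, hi, isSignedDescent_flipSigns_iff w hi]
  · simp [mem_signedWordDesSet, hi]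

theorem signedWordDesSet_subset_range {n r : ℕ} (w : SignedWord n r) :
    signedWordDesSet w ⊆ Finset.range n :=
  Finset.filter_subset _ _

theorem card_signedWordDesSet_le {n r : ℕ} (w : SignedWord n r) :
    (signedWordDesSet w).card ≤ n := by
  simpa using Finset.card_le_card (signedWordDesSet_subset_range w)

theorem card_signedWordDesSet_flipSigns {n r : ℕ} (w : SignedWord n r) :
    (signedWordDesSet (flipSigns w)).card = n - (signedWordDesSet w).card := by
  rw [signedWordDesSet_flipSigns, Finset.card_sdiff_of_subset (signedWordDesSet_subset_range w),
    Finset.card_range]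

theorem typeB_eulerian_palindromic_general (r : ℕ) (η : Fin r → ℕ)
    (n : ℕ) (k : ℕ) (hk : k ≤ n) :
    ((signedMultisetPerms n r η).filter (fun w => (signedWordDesSet w).card = k)).card
      = ((signedMultisetPerms n r η).filter
          (fun w => (signedWordDesSet w).card = n - k)).card := by
  refine Finset.card_nbij' flipSigns flipSigns ?_ ?_
    (fun w _ => flipSigns_involutive w) (fun w _ => flipSigns_involutive w)
  all_goals
    intro w hw
    simp only [Finset.coe_filter, Set.mem_ofPred_eq, flipSigns_mem_signedMultisetPerms_iff,
      card_signedWordDesSet_flipSigns] at hw ⊢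
    have := card_signedWordDesSet_le w
    exact ⟨hw.1, by omega⟩

/-- The generalised Eulerian numbers of type B are palindromic: for every composition
`η` of `n` and `0 ≤ k ≤ n`, the number of `w ∈ B_η` with `des(w) = k` equals the
number with `des(w) = n - k`.  Equivalently, `d_{B_η}(1/t) = t^{-n} d_{B_η}(t)`. -/
theorem typeB_eulerian_palindromic (r : ℕ) (hr : 0 < r) (η : Fin r → ℕ)
    (hη : ∀ i, 0 < η i) (n : ℕ) (hn : n = ∑ i, η i) (k : ℕ) (hk : k ≤ n) :
    ((signedMultisetPerms n r η).filter (fun w => (signedWordDesSet w).card = k)).card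
      = ((signedMultisetPerms n r η).filter
          (fun w => (signedWordDesSet w).card = n - k)).card :=
  typeB_eulerian_palindromic_general r η n k hk
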